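/- Let B ∈ ℝ^{N×K} and F ∈ ℝ^{T×K} with A = B Fᵀ. Then ‖A‖_* ≤ (1/2)(‖B‖_F² + ‖F‖_F²), with equality achieved when B = U D^{1/2} and F = V D^{1/2} where A = U D Vᵀ is a compact singular value decomposition of A. -/

import Mathlib

open Matrix

noncomputable def frobNorm {m n : Type*} [Fintype m] [Fintype n] (A : Matrix m n ℝ) : ℝ :=
  Real.sqrt (∑ i, ∑ j, (A i j) ^ 2)

/-- The nuclear norm of a real matrix: the sum of its singular values. -/
noncomputable def nuclearNorm {m n : Type*} [Fintype m] [Fintype n] [DecidableEq n]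
    (A : Matrix m n ℝ) : ℝ :=
  ∑ i, Real.sqrt ((show (Aᵀ * A).IsHermitian from Matrix.isHermitian_conjTranspose_mul_self A).eigenvalues i)

/-!
The polar factor `M = A (AᵀA)^{-1/2}` (with the inverse taken as `0` on the kernel) is a partial
isometry with `tr (Mᵀ A) = tr √(AᵀA) = ‖A‖_*`. For `A = B Fᵀ` this trace is the Frobenius pairing
of `Mᵀ B` with `F`, which AM–GM bounds by `½ (‖Mᵀ B‖² + ‖F‖²)`, and `‖Mᵀ B‖ ≤ ‖B‖` because `M Mᵀ`
is an orthogonal projection. For a compact SVD `A = U D Vᵀ`, the matrix `V D Vᵀ` is the positive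
square root of `AᵀA`, so `‖A‖_* = tr D = ‖U D^{1/2}‖² = ‖V D^{1/2}‖²`.
-/

namespace Matrix

variable {m n k : Type*} [Fintype m] [Fintype n] [Fintype k]

lemma frobNorm_nonneg (A : Matrix m n ℝ) : 0 ≤ frobNorm A := Real.sqrt_nonneg _

lemma frobNorm_sq_eq_sum (A : Matrix m n ℝ) : frobNorm A ^ 2 = ∑ i, ∑ j, A i j ^ 2 :=
  Real.sq_sqrt (by positivity)

lemma frobNorm_sq_eq_trace (A : Matrix m n ℝ) : frobNorm A ^ 2 = (Aᵀ * A).trace := by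
  rw [frobNorm_sq_eq_sum, trace, Finset.sum_comm]
  simp [mul_apply, sq]

lemma trace_mul_transpose_le (X Y : Matrix m n ℝ) :
    (X * Yᵀ).trace ≤ (frobNorm X ^ 2 + frobNorm Y ^ 2) / 2 := by
  simp only [frobNorm_sq_eq_sum, trace, diag, mul_apply, transpose_apply]
  rw [← Finset.sum_add_distrib, Finset.sum_div]
  refine Finset.sum_le_sum fun i _ => ?_
  rw [← Finset.sum_add_distrib, Finset.sum_div]
  exact Finset.sum_le_sum fun j _ => by nlinarith [sq_nonneg (X i j - Y i j)]

lemma frobNorm_transpose_mul_le {M : Matrix m n ℝ} (hM : M * Mᵀ * M = M) (B : Matrix m k ℝ) :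
    frobNorm (Mᵀ * B) ≤ frobNorm B := by
  classical
  set P := M * Mᵀ
  have hP : Pᵀ = P := by simp [P, transpose_mul]
  have hQ : (1 - P)ᵀ * (1 - P) = 1 - P := by
    have hPP : P * P = P := by rw [← Matrix.mul_assoc, hM]
    simp only [transpose_sub, transpose_one, hP, sub_mul, mul_sub, one_mul, mul_one, hPP]
    abel
  have hsplit : frobNorm B ^ 2 = frobNorm (Mᵀ * B) ^ 2 + frobNorm ((1 - P) * B) ^ 2 := by
    simp only [frobNorm_sq_eq_trace, transpose_mul, transpose_transpose]
    rw [Matrix.mul_assoc Bᵀ (1 - P)ᵀ, ← Matrix.mul_assoc (1 - P)ᵀ, hQ, Matrix.sub_mul,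
      Matrix.mul_sub, Matrix.one_mul, trace_sub]
    simp only [P, Matrix.mul_assoc]
    ring
  exact le_of_pow_le_pow_left₀ two_ne_zero (frobNorm_nonneg B)
    (by nlinarith [sq_nonneg (frobNorm ((1 - P) * B))])

lemma IsHermitian.trace_cfc {𝕜 : Type*} [RCLike 𝕜] [DecidableEq n] {A : Matrix n n 𝕜} (hA : A.IsHermitian)
    (f : ℝ → ℝ) : (cfc f A).trace = ∑ i, (f (hA.eigenvalues i) : 𝕜) := by
  rw [hA.cfc_eq, IsHermitian.cfc, Unitary.conjStarAlgAut_apply, trace_mul_cycle,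
    Unitary.coe_star_mul_self, one_mul, trace_diagonal]
  rfl

lemma nuclearNorm_eq_trace_cfc_sqrt [DecidableEq n] (A : Matrix m n ℝ) :
    nuclearNorm A = (cfc Real.sqrt (Aᵀ * A)).trace :=
  ((isHermitian_conjTranspose_mul_self A).trace_cfc _).symm

open scoped MatrixOrder in
lemma nuclearNorm_eq_trace_of_sq_eq [DecidableEq n] {A : Matrix m n ℝ} {S : Matrix n n ℝ}
    (hS : S.PosSemidef) (h : S ^ 2 = Aᵀ * A) : nuclearNorm A = S.trace := by
  have h0 : 0 ≤ S ^ 2 := h ▸ (posSemidef_conjTranspose_mul_self A).nonneg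
  rw [nuclearNorm_eq_trace_cfc_sqrt, ← h, ← cfcₙ_eq_cfc, ← CFC.sqrt_eq_real_sqrt _ h0,
    CFC.sqrt_sq S hS.nonneg]

lemma exists_partialIsometry_trace_eq_nuclearNorm [DecidableEq n] (A : Matrix m n ℝ) :
    ∃ M : Matrix m n ℝ, M * Mᵀ * M = M ∧ (Mᵀ * A).trace = nuclearNorm A := by
  set a := Aᵀ * A
  have ha : IsSelfAdjoint a := isHermitian_conjTranspose_mul_self A
  have hcont (f : ℝ → ℝ) : ContinuousOn f (spectrum ℝ a) := a.finite_real_spectrum.continuousOn f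
  -- Since `(√0)⁻¹ = 0`, `G` inverts `√a` on its range and vanishes on its kernel.
  set G := cfc (fun x => (√x)⁻¹) a
  have hG : Gᵀ = G := IsSymm.eq (cfc_predicate _ a)
  have hGa : G * a = cfc Real.sqrt a := by
    conv_lhs => rw [← cfc_id' ℝ a]
    rw [← cfc_mul _ _ a (hcont _) (hcont _)]
    congr 1 with x
    exact (inv_mul_eq_div _ _).trans Real.div_sqrt
  have hGaG : G * (G * a * G) = G := by
    rw [hGa, ← cfc_mul _ _ a (hcont _) (hcont _), ← cfc_mul _ _ a (hcont _) (hcont _)]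
    congr 1 with x
    rcases (Real.sqrt_nonneg x).eq_or_lt with hx | hx
    · simp [← hx]
    · field_simp
  refine ⟨A * G, ?_, ?_⟩
  · calc A * G * (A * G)ᵀ * (A * G) = A * (G * (G * a * G)) := by
          simp only [a, transpose_mul, hG, Matrix.mul_assoc]
      _ = A * G := by rw [hGaG]
  · rw [transpose_mul, hG, Matrix.mul_assoc, hGa, nuclearNorm_eq_trace_cfc_sqrt]

theorem nuclearNorm_mul_transpose_le [DecidableEq n] (B : Matrix m k ℝ) (F : Matrix n k ℝ) :
    nuclearNorm (B * Fᵀ) ≤ (frobNorm B ^ 2 + frobNorm F ^ 2) / 2 := by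
  obtain ⟨M, hM, htr⟩ := exists_partialIsometry_trace_eq_nuclearNorm (B * Fᵀ)
  calc nuclearNorm (B * Fᵀ) = (Mᵀ * B * Fᵀ).trace := by rw [← htr, Matrix.mul_assoc]
    _ ≤ (frobNorm (Mᵀ * B) ^ 2 + frobNorm F ^ 2) / 2 := trace_mul_transpose_le _ _
    _ ≤ (frobNorm B ^ 2 + frobNorm F ^ 2) / 2 := by
      gcongr
      · exact frobNorm_nonneg _
      · exact frobNorm_transpose_mul_le hM B

variable [DecidableEq k] {d : k → ℝ}

lemma diagonal_sqrt_mul_self (hd : ∀ r, 0 ≤ d r) :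
    diagonal (fun r => √(d r)) * diagonal (fun r => √(d r)) = diagonal d := by
  rw [diagonal_mul_diagonal]
  congr 1 with r
  exact Real.mul_self_sqrt (hd r)

lemma frobNorm_mul_diagonal_sqrt_sq {U : Matrix m k ℝ} (hU : Uᵀ * U = 1) (hd : ∀ r, 0 ≤ d r) :
    frobNorm (U * diagonal fun r => √(d r)) ^ 2 = ∑ r, d r := by
  rw [frobNorm_sq_eq_trace, transpose_mul, diagonal_transpose, Matrix.mul_assoc,
    ← Matrix.mul_assoc Uᵀ, hU, Matrix.one_mul, diagonal_sqrt_mul_self hd, trace_diagonal]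

lemma nuclearNorm_mul_diagonal_mul_transpose [DecidableEq n] {U : Matrix m k ℝ}
    {V : Matrix n k ℝ} (hU : Uᵀ * U = 1) (hV : Vᵀ * V = 1) (hd : ∀ r, 0 ≤ d r) :
    nuclearNorm (U * diagonal d * Vᵀ) = ∑ r, d r := by
  have hS : (V * diagonal d * Vᵀ).PosSemidef := by
    simpa using (posSemidef_diagonal_iff.mpr hd).mul_mul_conjTranspose_same V
  have hsq : (V * diagonal d * Vᵀ) ^ 2 = (U * diagonal d * Vᵀ)ᵀ * (U * diagonal d * Vᵀ) := by
    calc (V * diagonal d * Vᵀ) ^ 2 = V * diagonal d * (Vᵀ * V) * diagonal d * Vᵀ := by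
          simp only [sq, Matrix.mul_assoc]
      _ = V * diagonal d * (Uᵀ * U) * diagonal d * Vᵀ := by rw [hU, hV]
      _ = (U * diagonal d * Vᵀ)ᵀ * (U * diagonal d * Vᵀ) := by
          simp only [transpose_mul, transpose_transpose, diagonal_transpose, Matrix.mul_assoc]
  rw [nuclearNorm_eq_trace_of_sq_eq hS hsq, trace_mul_cycle, hV, Matrix.one_mul, trace_diagonal]

end Matrix

/-- For any factorization `A = B Fᵀ`, `‖A‖_* ≤ ½(‖B‖_F² + ‖F‖_F²)`; equality is achieved
with `B = U D^{1/2}`, `F = V D^{1/2}` for a compact SVD `A = U D Vᵀ`. -/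
theorem stmt6 {N T K : ℕ} (A : Matrix (Fin N) (Fin T) ℝ)
    (B : Matrix (Fin N) (Fin K) ℝ) (F : Matrix (Fin T) (Fin K) ℝ) (hA : A = B * Fᵀ) :
    nuclearNorm A ≤ (1 / 2) * (frobNorm B ^ 2 + frobNorm F ^ 2) ∧
    ∀ (U : Matrix (Fin N) (Fin K) ℝ) (V : Matrix (Fin T) (Fin K) ℝ) (dv : Fin K → ℝ),
      Uᵀ * U = 1 → Vᵀ * V = 1 → (∀ r, 0 ≤ dv r) →
      A = U * Matrix.diagonal dv * Vᵀ →
      nuclearNorm A = (1 / 2) *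
        (frobNorm (U * Matrix.diagonal fun r => Real.sqrt (dv r)) ^ 2
          + frobNorm (V * Matrix.diagonal fun r => Real.sqrt (dv r)) ^ 2) := by
  refine ⟨?_, fun U V dv hU hV hdv hSVD => ?_⟩
  · rw [hA]
    linarith [nuclearNorm_mul_transpose_le B F]
  · rw [hSVD, nuclearNorm_mul_diagonal_mul_transpose hU hV hdv,
      frobNorm_mul_diagonal_sqrt_sq hU hdv, frobNorm_mul_diagonal_sqrt_sq hV hdv]
    ring
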